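/- Let f : ℝ → ℝ be a measurable function that grows at most linearly, let W ∈ ℝ^{D×D} be a fixed matrix with no zero rows, let b ∈ ℝ^D be fixed, let E ∈ ℝ^{m×D} be a standard Gaussian matrix, and let B ∈ ℝ^{m×D} be the matrix whose every row equals bᵀ. Then there exist constants C, C', c > 0, with C' and c depending only on f, W and b, such that whenever m ≥ C'·D, with probability at least 1 − exp(−c m) it holds that (1/√m) · ‖f(EWᵀ + B)‖₂ ≤ C·√D, where C depends only on f, W and b. -/

import Mathlib

open MeasureTheory ProbabilityTheory

lemma glemma_density : gaussianReal 0 1 =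
    volume.withDensity (fun x => ((gaussianPDFReal 0 1 x).toNNReal : ENNReal)) := by
  rw [gaussianReal_of_var_ne_zero _ one_ne_zero]
  rfl

lemma glemma_prod (x : ℝ) : gaussianPDFReal 0 1 x * Real.exp (x^2/4)
    = (Real.sqrt (2*Real.pi))⁻¹ * Real.exp (-(4⁻¹) * x^2) := by
  unfold gaussianPDFReal
  push_cast
  rw [mul_one, mul_assoc, ← Real.exp_add]
  ring_nf

lemma int1 : Integrable (fun x => Real.exp (x^2/4)) (gaussianReal 0 1) := by
  rw [glemma_density,
    integrable_withDensity_iff_integrable_smul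
      ((measurable_gaussianPDFReal 0 1).real_toNNReal)]
  have : (fun x : ℝ => (gaussianPDFReal 0 1 x).toNNReal • Real.exp (x^2/4))
      = fun x => (Real.sqrt (2*Real.pi))⁻¹ * Real.exp (-(4⁻¹) * x^2) := by
    funext x
    rw [NNReal.smul_def, smul_eq_mul, Real.coe_toNNReal _ (gaussianPDFReal_nonneg 0 1 x),
      glemma_prod]
  rw [this]
  exact (integrable_exp_neg_mul_sq (by norm_num)).const_mul _

lemma int2 : ∫ x, Real.exp (x^2/4) ∂(gaussianReal 0 1) = Real.sqrt 2 := by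
  rw [glemma_density,
    integral_withDensity_eq_integral_smul ((measurable_gaussianPDFReal 0 1).real_toNNReal)]
  have : (fun x : ℝ => (gaussianPDFReal 0 1 x).toNNReal • Real.exp (x^2/4))
      = fun x => (Real.sqrt (2*Real.pi))⁻¹ * Real.exp (-(4⁻¹) * x^2) := by
    funext x
    rw [NNReal.smul_def, smul_eq_mul, Real.coe_toNNReal _ (gaussianPDFReal_nonneg 0 1 x),
      glemma_prod]
  rw [this, MeasureTheory.integral_const_mul, integral_gaussian]
  rw [show Real.pi / (4:ℝ)⁻¹ = 2 * (2 * Real.pi) by ring, Real.sqrt_mul (by norm_num)]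
  rw [Real.sqrt_mul two_pos.le (2*Real.pi), Real.sqrt_mul two_pos.le Real.pi]
  have h1 : Real.sqrt Real.pi ≠ 0 := by positivity
  have h2 : Real.sqrt 2 ≠ 0 := by positivity
  field_simp
lemma chi_tail (ι : Type*) [Fintype ι] :
    (Measure.pi fun _ : ι => gaussianReal 0 1)
      {ω : ι → ℝ | (2 * (Fintype.card ι) : ℝ) ≤ ∑ i, (ω i)^2}
      ≤ ENNReal.ofReal (Real.exp (-((1/2 - Real.log 2 / 2) * (Fintype.card ι)))) := by
  letI : MeasureSpace ℝ := ⟨gaussianReal 0 1⟩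
  haveI : IsProbabilityMeasure (volume : Measure ℝ) :=
    inferInstanceAs (IsProbabilityMeasure (gaussianReal 0 1))
  haveI : SigmaFinite (volume : Measure ℝ) := inferInstance
  set μ : Measure (ι → ℝ) := Measure.pi fun _ : ι => gaussianReal 0 1 with hμ
  haveI : IsProbabilityMeasure μ := by infer_instance
  have hμvol : μ = (volume : Measure (ι → ℝ)) := rfl
  have hre : (fun ω : ι → ℝ => Real.exp ((1/4) * ∑ i, (ω i)^2))
      = fun ω : ι → ℝ => ∏ i, Real.exp ((ω i)^2 / 4) := by
    funext ω
    rw [← Real.exp_sum, Finset.mul_sum]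
    congr 1
    refine Finset.sum_congr rfl fun i _ => by ring
  have hint : Integrable (fun ω : ι → ℝ => Real.exp ((1/4) * ∑ i, (ω i)^2)) μ := by
    rw [hre, hμvol]
    exact Integrable.fintype_prod (f := fun _ : ι => fun x : ℝ => Real.exp (x^2/4))
      (fun _ => int1)
  have hmgf : mgf (fun ω : ι → ℝ => ∑ i, (ω i)^2) μ (1/4)
      = Real.sqrt 2 ^ (Fintype.card ι) := by
    rw [mgf, hre, hμvol]
    rw [MeasureTheory.integral_fintype_prod_volume_eq_pow (ι := ι) (fun x : ℝ => Real.exp (x^2/4))]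
    congr 1
    exact int2
  have key := measure_ge_le_exp_mul_mgf (X := fun ω : ι → ℝ => ∑ i, (ω i)^2) (μ := μ)
    (2 * (Fintype.card ι) : ℝ) (by norm_num : (0:ℝ) ≤ 1/4) hint
  rw [hmgf] at key
  have hs2 : Real.sqrt 2 ^ (Fintype.card ι)
      = Real.exp ((Fintype.card ι) * (Real.log 2 / 2)) := by
    rw [Real.exp_nat_mul, ← Real.log_sqrt (by norm_num : (0:ℝ) ≤ 2),
      Real.exp_log (Real.sqrt_pos.mpr two_pos)]
  have hval : Real.exp (-(1/4) * (2 * (Fintype.card ι))) * Real.sqrt 2 ^ (Fintype.card ι)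
      = Real.exp (-((1/2 - Real.log 2 / 2) * (Fintype.card ι))) := by
    rw [hs2, ← Real.exp_add]
    congr 1
    ring
  rw [hval] at key
  calc μ {ω : ι → ℝ | (2 * (Fintype.card ι) : ℝ) ≤ ∑ i, (ω i)^2}
      = ENNReal.ofReal (μ {ω : ι → ℝ | (2 * (Fintype.card ι) : ℝ) ≤ ∑ i, (ω i)^2}).toReal :=
        (ENNReal.ofReal_toReal (measure_ne_top μ _)).symm
    _ ≤ ENNReal.ofReal (Real.exp (-((1/2 - Real.log 2 / 2) * (Fintype.card ι)))) :=
        ENNReal.ofReal_le_ofReal key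

lemma det_bound (m D : ℕ) (f : ℝ → ℝ) (a b₀ : ℝ) (ha : 0 ≤ a) (hb₀ : 0 ≤ b₀)
    (hgrow : ∀ x, |f x| ≤ a * |x| + b₀) (W : Matrix (Fin D) (Fin D) ℝ) (b : Fin D → ℝ)
    (hD : 1 ≤ D) (ω : Fin m × Fin D → ℝ)
    (hS : ∑ p, (ω p)^2 ≤ 2*((m:ℝ)*(D:ℝ))) :
    ∑ i : Fin m, ∑ j, (f (∑ k, ω (i,k) * W j k + b j))^2 ≤
      (8*a^2*(∑ j, ∑ k, (W j k)^2) + 4*a^2*(∑ j, (b j)^2) + 2*b₀^2) * ((m:ℝ)*(D:ℝ)) := by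
  set w := ∑ j, ∑ k, (W j k)^2 with hw
  set β := ∑ j, (b j)^2 with hβ
  have hw0 : 0 ≤ w := Finset.sum_nonneg fun j _ => Finset.sum_nonneg fun k _ => sq_nonneg _
  have hβ0 : 0 ≤ β := Finset.sum_nonneg fun j _ => sq_nonneg _
  have hS0 : 0 ≤ ∑ p : Fin m × Fin D, (ω p)^2 := Finset.sum_nonneg fun p _ => sq_nonneg _
  -- pointwise bound
  have hpt : ∀ i : Fin m, ∀ j : Fin D,
      (f (∑ k, ω (i,k) * W j k + b j))^2 ≤
        2*a^2*(2*(∑ k, (ω (i,k))^2)*(∑ k, (W j k)^2) + 2*(b j)^2) + 2*b₀^2 := by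
    intro i j
    set x := ∑ k, ω (i,k) * W j k + b j with hx
    have h1 : (f x)^2 ≤ 2*a^2*x^2 + 2*b₀^2 := by
      have hg := hgrow x
      have h2 : (f x)^2 ≤ (a*|x| + b₀)^2 := by
        rw [← sq_abs (f x)]
        exact pow_le_pow_left₀ (abs_nonneg _) hg 2
      nlinarith [sq_nonneg (a*|x| - b₀), sq_abs x, abs_nonneg x]
    have h3 : x^2 ≤ 2*(∑ k, ω (i,k) * W j k)^2 + 2*(b j)^2 := by
      rw [hx]
      nlinarith [sq_nonneg ((∑ k, ω (i,k) * W j k) - b j)]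
    have hcs := Finset.sum_mul_sq_le_sq_mul_sq Finset.univ (fun k => ω (i,k)) (fun k => W j k)
    nlinarith [sq_nonneg a]
  calc ∑ i : Fin m, ∑ j, (f (∑ k, ω (i,k) * W j k + b j))^2
      ≤ ∑ i : Fin m, ∑ j,
          (2*a^2*(2*(∑ k, (ω (i,k))^2)*(∑ k, (W j k)^2) + 2*(b j)^2) + 2*b₀^2) :=
        Finset.sum_le_sum fun i _ => Finset.sum_le_sum fun j _ => hpt i j
    _ = 4*a^2*(∑ p : Fin m × Fin D, (ω p)^2)*w + 4*a^2*β*(m:ℝ) + 2*b₀^2*((m:ℝ)*(D:ℝ)) := by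
        have inner : ∀ i : Fin m,
            ∑ j, (2*a^2*(2*(∑ k, (ω (i,k))^2)*(∑ k, (W j k)^2) + 2*(b j)^2) + 2*b₀^2)
            = (4*a^2*(∑ k, (ω (i,k))^2))*w + (4*a^2*β + (D:ℝ)*(2*b₀^2)) := by
          intro i
          have hjj : ∀ j : Fin D,
              2*a^2*(2*(∑ k, (ω (i,k))^2)*(∑ k, (W j k)^2) + 2*(b j)^2) + 2*b₀^2
              = (4*a^2*(∑ k, (ω (i,k))^2))*(∑ k, (W j k)^2) + (4*a^2*(b j)^2 + 2*b₀^2) := by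
            intro j; ring
          rw [Finset.sum_congr rfl fun j _ => hjj j, Finset.sum_add_distrib, ← Finset.mul_sum,
            Finset.sum_add_distrib, Finset.sum_const, Finset.card_univ, Fintype.card_fin,
            nsmul_eq_mul, ← Finset.mul_sum, ← hw, ← hβ]
        rw [Finset.sum_congr rfl fun i _ => inner i, Finset.sum_add_distrib, Finset.sum_const,
          Finset.card_univ, Fintype.card_fin, nsmul_eq_mul, ← Finset.sum_mul, ← Finset.mul_sum,
          Fintype.sum_prod_type]
        ring
    _ ≤ 4*a^2*(2*((m:ℝ)*(D:ℝ)))*w + 4*a^2*β*((m:ℝ)*(D:ℝ)) + 2*b₀^2*((m:ℝ)*(D:ℝ)) := by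
        have hD1 : (1:ℝ) ≤ (D:ℝ) := by exact_mod_cast hD
        have hmd : (m:ℝ) ≤ (m:ℝ)*(D:ℝ) := le_mul_of_one_le_right (Nat.cast_nonneg m) hD1
        gcongr
    _ = (8*a^2*w + 4*a^2*β + 2*b₀^2) * ((m:ℝ)*(D:ℝ)) := by ring

/-- For measurable `f : ℝ → ℝ` growing at most linearly, a fixed matrix
`W ∈ ℝ^{D×D}` with no zero rows, fixed `b ∈ ℝ^D`, a standard Gaussian matrix
`E ∈ ℝ^{m×D}` and `B` whose rows all equal `bᵀ`: there exist `C, C', c > 0`, with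
`C'` and `c` (and `C`) depending only on `f, W, b`, such that whenever `m ≥ C' D`,
with probability at least `1 − exp(−c m)` the spectral norm satisfies
`(1/√m) ‖f(EWᵀ + B)‖₂ ≤ C √D`, i.e. `(1/√m) ‖f(EWᵀ + B) γ‖₂ ≤ C √D ‖γ‖₂` for all `γ`. -/
theorem stmt_6 (D : ℕ) (f : ℝ → ℝ) (hf : Measurable f)
    (a b₀ : ℝ) (ha : 0 ≤ a) (hb₀ : 0 ≤ b₀) (hgrow : ∀ x, |f x| ≤ a * |x| + b₀)
    (W : Matrix (Fin D) (Fin D) ℝ) (hW : ∀ i, W i ≠ 0) (b : Fin D → ℝ) :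
    ∃ C C' c : ℝ, 0 < C ∧ 0 < C' ∧ 0 < c ∧
      ∀ m : ℕ, C' * (D : ℝ) ≤ (m : ℝ) →
        1 - ENNReal.ofReal (Real.exp (-(c * m))) ≤
          (Measure.pi fun _ : Fin m × Fin D => gaussianReal 0 1)
            {ω | ∀ γ : Fin D → ℝ,
              (1 / Real.sqrt m) *
                  Real.sqrt (∑ i : Fin m, (∑ j, f (∑ k, ω (i, k) * W j k + b j) * γ j) ^ 2)
                ≤ C * Real.sqrt D * Real.sqrt (∑ j, (γ j) ^ 2)} := by
  set w := ∑ j, ∑ k, (W j k)^2 with hw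
  set β := ∑ j, (b j)^2 with hβ
  have hw0 : 0 ≤ w := Finset.sum_nonneg fun j _ => Finset.sum_nonneg fun k _ => sq_nonneg _
  have hβ0 : 0 ≤ β := Finset.sum_nonneg fun j _ => sq_nonneg _
  set C₁ : ℝ := 8*a^2*w + 4*a^2*β + 2*b₀^2 + 1 with hC₁
  have hC₁1 : 1 ≤ C₁ := by nlinarith [sq_nonneg a, sq_nonneg b₀]
  have hC₁0 : 0 < C₁ := lt_of_lt_of_le one_pos hC₁1
  refine ⟨Real.sqrt C₁, 1, 1/2 - Real.log 2 / 2, Real.sqrt_pos.mpr hC₁0, one_pos, ?_, ?_⟩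
  · nlinarith [Real.log_two_lt_d9]
  intro m hm
  set μ := Measure.pi fun _ : Fin m × Fin D => gaussianReal 0 1 with hμ
  haveI : IsProbabilityMeasure μ := by rw [hμ]; infer_instance
  by_cases hD0 : D = 0
  · subst hD0
    have huniv : {ω : Fin m × Fin 0 → ℝ | ∀ γ : Fin 0 → ℝ,
        (1 / Real.sqrt m) *
            Real.sqrt (∑ i : Fin m, (∑ j, f (∑ k, ω (i, k) * W j k + b j) * γ j) ^ 2)
          ≤ Real.sqrt C₁ * Real.sqrt (0:ℕ) * Real.sqrt (∑ j, (γ j) ^ 2)} = Set.univ := by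
      ext ω
      simp
    rw [huniv, measure_univ]
    exact tsub_le_self
  · have hD : 1 ≤ D := Nat.one_le_iff_ne_zero.mpr hD0
    have hD1 : (1:ℝ) ≤ (D:ℝ) := by exact_mod_cast hD
    have hm1 : (1:ℝ) ≤ (m:ℝ) := by
      rw [one_mul] at hm; exact hD1.trans hm
    have hmpos : (0:ℝ) < (m:ℝ) := lt_of_lt_of_le one_pos hm1
    have hsm : (0:ℝ) < Real.sqrt m := Real.sqrt_pos.mpr hmpos
    -- the tail bound
    have htail := chi_tail (Fin m × Fin D)
    have hcard : ((Fintype.card (Fin m × Fin D) : ℕ) : ℝ) = (m:ℝ)*(D:ℝ) := by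
      simp [Fintype.card_prod]
    rw [hcard] at htail
    have htail2 : μ {ω : Fin m × Fin D → ℝ | 2*((m:ℝ)*(D:ℝ)) ≤ ∑ p, (ω p)^2}
        ≤ ENNReal.ofReal (Real.exp (-((1/2 - Real.log 2 / 2) * m))) := by
      refine htail.trans (ENNReal.ofReal_le_ofReal (Real.exp_le_exp.mpr ?_))
      have hc0 : (0:ℝ) ≤ 1/2 - Real.log 2 / 2 := by nlinarith [Real.log_two_lt_d9]
      have : (1/2 - Real.log 2 / 2) * (m:ℝ) ≤ (1/2 - Real.log 2 / 2) * ((m:ℝ)*(D:ℝ)) := by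
        apply mul_le_mul_of_nonneg_left _ hc0
        exact le_mul_of_one_le_right (le_of_lt hmpos) hD1
      linarith
    -- the deterministic inclusion
    have hsub : {ω : Fin m × Fin D → ℝ | ∑ p, (ω p)^2 < 2*((m:ℝ)*(D:ℝ))} ⊆
        {ω : Fin m × Fin D → ℝ | ∀ γ : Fin D → ℝ,
          (1 / Real.sqrt m) *
              Real.sqrt (∑ i : Fin m, (∑ j, f (∑ k, ω (i, k) * W j k + b j) * γ j) ^ 2)
            ≤ Real.sqrt C₁ * Real.sqrt D * Real.sqrt (∑ j, (γ j) ^ 2)} := by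
      intro ω hω γ
      set sγ := ∑ j, (γ j)^2 with hsγ
      have hsγ0 : 0 ≤ sγ := Finset.sum_nonneg fun j _ => sq_nonneg _
      have hF := det_bound m D f a b₀ ha hb₀ hgrow W b hD ω (le_of_lt hω)
      rw [← hw, ← hβ] at hF
      have hT : ∑ i : Fin m, (∑ j, f (∑ k, ω (i, k) * W j k + b j) * γ j) ^ 2
          ≤ (∑ i : Fin m, ∑ j, (f (∑ k, ω (i,k) * W j k + b j))^2) * sγ := by
        rw [Finset.sum_mul]
        exact Finset.sum_le_sum fun i _ =>
          Finset.sum_mul_sq_le_sq_mul_sq Finset.univ (fun j => f (∑ k, ω (i,k) * W j k + b j)) γ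
      have hT2 : ∑ i : Fin m, (∑ j, f (∑ k, ω (i, k) * W j k + b j) * γ j) ^ 2
          ≤ C₁ * ((m:ℝ)*(D:ℝ)) * sγ := by
        refine hT.trans ?_
        have h8 : (8*a^2*w + 4*a^2*β + 2*b₀^2) * ((m:ℝ)*(D:ℝ)) ≤ C₁ * ((m:ℝ)*(D:ℝ)) := by
          apply mul_le_mul_of_nonneg_right _ (by positivity)
          rw [hC₁]; linarith
        exact mul_le_mul_of_nonneg_right (hF.trans h8) hsγ0
      have hsq : Real.sqrt (∑ i : Fin m, (∑ j, f (∑ k, ω (i, k) * W j k + b j) * γ j) ^ 2)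
          ≤ Real.sqrt m * (Real.sqrt C₁ * Real.sqrt D * Real.sqrt sγ) := by
        refine (Real.sqrt_le_sqrt hT2).trans_eq ?_
        rw [show C₁ * ((m:ℝ)*(D:ℝ)) * sγ = (m:ℝ) * (C₁ * ((D:ℝ) * sγ)) by ring,
          Real.sqrt_mul (Nat.cast_nonneg m), Real.sqrt_mul (le_of_lt hC₁0),
          Real.sqrt_mul (Nat.cast_nonneg D)]
        ring
      calc (1 / Real.sqrt m) *
            Real.sqrt (∑ i : Fin m, (∑ j, f (∑ k, ω (i, k) * W j k + b j) * γ j) ^ 2)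
          ≤ (1 / Real.sqrt m) * (Real.sqrt m * (Real.sqrt C₁ * Real.sqrt D * Real.sqrt sγ)) :=
            mul_le_mul_of_nonneg_left hsq (by positivity)
        _ = Real.sqrt C₁ * Real.sqrt D * Real.sqrt sγ := by
            rw [← mul_assoc, one_div_mul_cancel (ne_of_gt hsm), one_mul]
    -- measure argument
    have hXmeas : Measurable (fun ω : Fin m × Fin D → ℝ => ∑ p, (ω p)^2) :=
      Finset.measurable_sum _ fun p _ => (measurable_pi_apply p).pow_const 2
    have hmeas : MeasurableSet {ω : Fin m × Fin D → ℝ | 2*((m:ℝ)*(D:ℝ)) ≤ ∑ p, (ω p)^2} :=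
      measurableSet_le measurable_const hXmeas
    have hcompl : {ω : Fin m × Fin D → ℝ | ∑ p, (ω p)^2 < 2*((m:ℝ)*(D:ℝ))}
        = {ω : Fin m × Fin D → ℝ | 2*((m:ℝ)*(D:ℝ)) ≤ ∑ p, (ω p)^2}ᶜ := by
      ext ω; simp [not_le]
    have hlow : 1 - ENNReal.ofReal (Real.exp (-((1/2 - Real.log 2 / 2) * m)))
        ≤ μ {ω : Fin m × Fin D → ℝ | ∑ p, (ω p)^2 < 2*((m:ℝ)*(D:ℝ))} := by
      rw [hcompl, prob_compl_eq_one_sub hmeas]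
      exact tsub_le_tsub_left htail2 1
    exact hlow.trans (measure_mono hsub)
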